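/- arXiv:2209.10972 — 2 statements merged into one kernel-verified Lean document; each statement's English description precedes it below -/
import Mathlib

section
/- Shrinking a bounded set away from its frontier by a small enough ε separates its finitely many connected components: the shrunken pieces are nonempty and have pairwise disjoint closures. -/
/-!
Every point of the closure of a shrunken piece stays at distance at least `ε > 0` from the
frontier `closure X \ X`, hence lies in `X`. A point of `X` adherent to a connected component of
`X` belongs to that component, so the closure of the shrunken `i`-th piece stays inside `X_i`,
and distinct components are disjoint.
-/

open Set Metric

theorem closure_inter_subset_connectedComponentIn {α : Type*} [TopologicalSpace α]
    {X : Set α} {y : α} (hy : y ∈ X) :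
    closure (connectedComponentIn X y) ∩ X ⊆ connectedComponentIn X y := by
  rintro z ⟨hz, hzX⟩
  have hconn : IsPreconnected (insert z (connectedComponentIn X y)) :=
    isPreconnected_connectedComponentIn.subset_closure (subset_insert _ _)
      (insert_subset hz subset_closure)
  exact hconn.subset_connectedComponentIn (mem_insert_of_mem _ (mem_connectedComponentIn hy))
    (insert_subset hzX (connectedComponentIn_subset X y)) (mem_insert z _)

theorem closure_sep_le_infDist_frontier_subset {α : Type*} [PseudoMetricSpace α]
    {X S : Set α} {ε : ℝ} (hS : S ⊆ X) (hε : 0 < ε) :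
    closure {x ∈ S | ε ≤ infDist x (closure X \ X)} ⊆ closure S ∩ X := by
  intro z hz
  have hzε : ε ≤ infDist z (closure X \ X) :=
    closure_minimal (fun x hx => hx.2)
      (isClosed_le continuous_const (continuous_infDist_pt _)) hz
  have hzS : z ∈ closure S := closure_mono (fun x hx => hx.1) hz
  refine ⟨hzS, by_contra fun hzX => ?_⟩
  have hz0 : infDist z (closure X \ X) = 0 := infDist_zero_of_mem ⟨closure_mono hS hzS, hzX⟩
  linarith

theorem closure_sep_le_infDist_frontier_subset_connectedComponentIn {α : Type*}
    [PseudoMetricSpace α] {X : Set α} {y : α} {ε : ℝ} (hy : y ∈ X) (hε : 0 < ε) :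
    closure {x ∈ connectedComponentIn X y | ε ≤ infDist x (closure X \ X)} ⊆
      connectedComponentIn X y :=
  (closure_sep_le_infDist_frontier_subset (connectedComponentIn_subset X y) hε).trans
    (closure_inter_subset_connectedComponentIn hy)

theorem stmt_7_general {ℓ N : ℕ} (X : Set (EuclideanSpace ℝ (Fin ℓ)))
    (Xc : Fin N → Set (EuclideanSpace ℝ (Fin ℓ)))
    (hcomp : ∀ i, ∃ y ∈ X, Xc i = connectedComponentIn X y)
    (hdisj : ∀ i j, i ≠ j → Xc i ∩ Xc j = ∅)
    (ε : ℝ) (hε : 0 < ε)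
    (hεsmall : ∀ i, ε < sSup ((fun x => Metric.infDist x (closure X \ X)) '' Xc i)) :
    (∀ i, {x ∈ Xc i | ε ≤ Metric.infDist x (closure X \ X)}.Nonempty) ∧
    (∀ i j, i ≠ j →
      closure {x ∈ Xc i | ε ≤ Metric.infDist x (closure X \ X)} ∩
      closure {x ∈ Xc j | ε ≤ Metric.infDist x (closure X \ X)} = ∅) := by
  have hclosure : ∀ i, closure {x ∈ Xc i | ε ≤ infDist x (closure X \ X)} ⊆ Xc i := by
    intro i
    obtain ⟨y, hy, hXc⟩ := hcomp i
    rw [hXc]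
    exact closure_sep_le_infDist_frontier_subset_connectedComponentIn hy hε
  refine ⟨fun i => ?_, fun i j hij => ?_⟩
  · obtain ⟨y, hy, hXc⟩ := hcomp i
    have hne : (Xc i).Nonempty := ⟨y, hXc ▸ mem_connectedComponentIn hy⟩
    obtain ⟨_, ⟨x, hx, rfl⟩, hεx⟩ := exists_lt_of_lt_csSup (hne.image _) (hεsmall i)
    exact ⟨x, hx, hεx.le⟩
  · exact subset_empty_iff.mp <| hdisj i j hij ▸ inter_subset_inter (hclosure i) (hclosure j)

theorem stmt_7 {ℓ N : ℕ} (X : Set (EuclideanSpace ℝ (Fin ℓ)))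
    (hbdd : Bornology.IsBounded X)
    (Xc : Fin N → Set (EuclideanSpace ℝ (Fin ℓ)))
    (hcomp : ∀ i, ∃ y ∈ X, Xc i = connectedComponentIn X y)
    (hunion : (⋃ i, Xc i) = X)
    (hdisj : ∀ i j, i ≠ j → Xc i ∩ Xc j = ∅)
    (ε : ℝ) (hε : 0 < ε)
    (hεsmall : ∀ i, ε < sSup ((fun x => Metric.infDist x (closure X \ X)) '' Xc i)) :
    (∀ i, {x ∈ Xc i | ε ≤ Metric.infDist x (closure X \ X)}.Nonempty) ∧
    (∀ i j, i ≠ j →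
      closure {x ∈ Xc i | ε ≤ Metric.infDist x (closure X \ X)} ∩
      closure {x ∈ Xc j | ε ≤ Metric.infDist x (closure X \ X)} = ∅) :=
  stmt_7_general X Xc hcomp hdisj ε hε hεsmall
end

section
/- In a cylindrical partition, compatibility with a set is inherited by projections: if a partition of ℝ^{ℓ+1} has the property that any two cells have equal or disjoint projections to ℝ^ℓ, and every cell is compatible with X ⊆ ℝ^{ℓ+1}, then the projection of every cell is compatible with π(X). -/
/-- `C` is compatible with `S`: either `C ⊆ S` or `C ∩ S = ∅`. -/
def Compatible {U : Type*} (C S : Set U) : Prop :=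
  C ⊆ S ∨ C ∩ S = ∅

/-!
A point `y ∈ π(C_j) ∩ π(X)` is the image of some `x ∈ X`, lying in some cell `C_k`.
Compatibility forces `C_k ⊆ X`, and `y ∈ π(C_j) ∩ π(C_k)` forces `π(C_j) = π(C_k)`,
so `π(C_j) = π(C_k) ⊆ π(X)`.
-/

theorem Compatible.subset_of_nonempty_inter {U : Type*} {C S : Set U}
    (h : Compatible C S) (hne : (C ∩ S).Nonempty) : C ⊆ S :=
  h.resolve_right hne.ne_empty

theorem Compatible.image {α β ι : Type*} (f : α → β) (C : ι → Set α)
    (hcover : (⋃ i, C i) = Set.univ)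
    (hcyl : ∀ i j, f '' C i = f '' C j ∨ (f '' C i) ∩ (f '' C j) = ∅)
    {X : Set α} (hcompat : ∀ i, Compatible (C i) X) (i : ι) :
    Compatible (f '' C i) (f '' X) := by
  refine (Set.eq_empty_or_nonempty _).symm.imp_left fun hne => ?_
  obtain ⟨y, hyC, x, hxX, rfl⟩ := hne
  obtain ⟨k, hxk⟩ := Set.mem_iUnion.mp (hcover ▸ Set.mem_univ x)
  have hCkX : C k ⊆ X := (hcompat k).subset_of_nonempty_inter ⟨x, hxk, hxX⟩
  have heq : f '' C i = f '' C k :=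
    (hcyl i k).resolve_right (Set.nonempty_iff_ne_empty.mp ⟨f x, hyC, x, hxk, rfl⟩)
  exact heq ▸ Set.image_mono hCkX

theorem stmt_17_general {ℓ : ℕ} {J : Type*}
    (π : (Fin (ℓ+1) → ℝ) → (Fin ℓ → ℝ))
    (C : J → Set (Fin (ℓ+1) → ℝ))
    (hcover : (⋃ j, C j) = Set.univ)
    (hcyl : ∀ j k, π '' C j = π '' C k ∨ (π '' C j) ∩ (π '' C k) = ∅)
    (X : Set (Fin (ℓ+1) → ℝ))
    (hcompat : ∀ j, Compatible (C j) X) :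
    ∀ j, Compatible (π '' C j) (π '' X) :=
  Compatible.image π C hcover hcyl hcompat

theorem stmt_17 {ℓ : ℕ} {J : Type*}
    (π : (Fin (ℓ+1) → ℝ) → (Fin ℓ → ℝ)) (hπ : π = fun x => x ∘ Fin.castSucc)
    (C : J → Set (Fin (ℓ+1) → ℝ))
    (hdisj : ∀ j k, j ≠ k → C j ∩ C k = ∅)
    (hcover : (⋃ j, C j) = Set.univ)
    (hcyl : ∀ j k, π '' C j = π '' C k ∨ (π '' C j) ∩ (π '' C k) = ∅)
    (X : Set (Fin (ℓ+1) → ℝ))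
    (hcompat : ∀ j, Compatible (C j) X) :
    ∀ j, Compatible (π '' C j) (π '' X) :=
  stmt_17_general π C hcover hcyl X hcompat
end
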